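/- The entropy of the stationary representation of the killed chain equals h(𝕐^{(𝒦)}) = -∑_{i∈I} μ(i) P(i,ℰ) log P(i,ℰ) - (1-γ) ∑_{j∈I} μ(j) log μ(j) - ∑_{i,j∈I} μ(i) P(i,j) log P(i,j). -/

import Mathlib

/-!
The row entropy of `𝒦` at `(i, j, a)` depends only on `j`, and by `negMulLog (x * y) =
y * negMulLog x + x * negMulLog y` it splits into the killing, restart and inner-move parts.
Averaging over `ζ` only needs the law of the second coordinate, which is `μ`: the mass arriving
at `j` without killing is `(μ P_I)(j) = γ μ(j)`, and through the cemetery it is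
`(∑ᵢ μ(i) P(i, ℰ)) μ(j) = (1 - γ) μ(j)`.
-/

open Finset Matrix Real

namespace KilledChain

variable {I : Type*} [Fintype I]

noncomputable def markovEntropy {X : Type*} [Fintype X] (ζ : X → ℝ) (K : X → X → ℝ) : ℝ :=
  ∑ x, ζ x * ∑ y, negMulLog (K x y)

/-- The kernel `𝒦` on `I × I × Bool`, with `Q = P_I` and `q i = P(i, ℰ)`; the flag `false`
marks a transition through the cemetery, after which the chain restarts from `μ`. -/
def killedKernel [DecidableEq I] (Q : Matrix I I ℝ) (q μ : I → ℝ) (x y : I × I × Bool) : ℝ :=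
  if y.1 = x.2.1 then (if y.2.2 then Q x.2.1 y.2.1 else q x.2.1 * μ y.2.1) else 0

def killedLaw (Q : Matrix I I ℝ) (q μ : I → ℝ) (x : I × I × Bool) : ℝ :=
  if x.2.2 then μ x.1 * Q x.1 x.2.1 else μ x.1 * q x.1 * μ x.2.1

section

variable {Q : Matrix I I ℝ} {q μ : I → ℝ} {γ : ℝ}

theorem sum_mul_apply_eq_of_vecMul_eq_smul (hqsd : μ ᵥ* Q = γ • μ) (j : I) :
    ∑ i, μ i * Q i j = γ * μ j := by
  simpa [vecMul, dotProduct] using congrFun hqsd j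

theorem sum_mul_killing_eq_one_sub (hrow : ∀ i, ∑ j, Q i j + q i = 1) (hμ : ∑ i, μ i = 1)
    (hqsd : μ ᵥ* Q = γ • μ) : ∑ i, μ i * q i = 1 - γ := by
  have hmass : ∑ j, ∑ i, μ i * Q i j = γ := by
    simp_rw [sum_mul_apply_eq_of_vecMul_eq_smul hqsd, ← mul_sum, hμ, mul_one]
  calc ∑ i, μ i * q i = ∑ i, (μ i - ∑ j, μ i * Q i j) := by
        refine sum_congr rfl fun i _ => ?_
        rw [← mul_sum]
        linear_combination μ i * hrow i
    _ = 1 - γ := by rw [sum_sub_distrib, hμ, sum_comm, hmass]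

theorem sum_killedLaw_snd (hrow : ∀ i, ∑ j, Q i j + q i = 1) (hμ : ∑ i, μ i = 1)
    (hqsd : μ ᵥ* Q = γ • μ) (j : I) :
    ∑ i, ∑ a, killedLaw Q q μ (i, j, a) = μ j := by
  simp only [killedLaw, Fintype.sum_bool, if_true, Bool.false_eq_true, if_false]
  rw [sum_add_distrib, sum_mul_apply_eq_of_vecMul_eq_smul hqsd, ← sum_mul,
    sum_mul_killing_eq_one_sub hrow hμ hqsd]
  ring

variable [DecidableEq I]

theorem sum_negMulLog_killedKernel (hμ : ∑ i, μ i = 1) (x : I × I × Bool) :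
    ∑ y, negMulLog (killedKernel Q q μ x y)
      = negMulLog (q x.2.1) + q x.2.1 * ∑ k, negMulLog (μ k)
        + ∑ k, negMulLog (Q x.2.1 k) := by
  obtain ⟨i, j, a⟩ := x
  rw [Fintype.sum_prod_type, sum_eq_single j (fun l _ hl => by simp [killedKernel, hl])
    (by simp)]
  simp only [killedKernel, Fintype.sum_prod_type, Fintype.sum_bool, if_true,
    Bool.false_eq_true, if_false, negMulLog_mul, sum_add_distrib, ← sum_mul, ← mul_sum, hμ]
  ring

theorem markovEntropy_killed (hrow : ∀ i, ∑ j, Q i j + q i = 1) (hμ : ∑ i, μ i = 1)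
    (hqsd : μ ᵥ* Q = γ • μ) :
    markovEntropy (killedLaw Q q μ) (killedKernel Q q μ)
      = ∑ i, μ i * negMulLog (q i) + (1 - γ) * ∑ j, negMulLog (μ j)
        + ∑ i, ∑ j, μ i * negMulLog (Q i j) := by
  calc markovEntropy (killedLaw Q q μ) (killedKernel Q q μ)
      = ∑ j, (∑ i, ∑ a, killedLaw Q q μ (i, j, a)) * (negMulLog (q j)
          + q j * ∑ k, negMulLog (μ k) + ∑ k, negMulLog (Q j k)) := by
        simp only [markovEntropy, sum_negMulLog_killedKernel hμ, Fintype.sum_prod_type, sum_mul]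
        exact sum_comm
    _ = ∑ j, μ j * (negMulLog (q j) + q j * ∑ k, negMulLog (μ k) + ∑ k, negMulLog (Q j k)) := by
        simp only [sum_killedLaw_snd hrow hμ hqsd]
    _ = _ := by
        have hcross :
            ∑ j, μ j * (q j * ∑ k, negMulLog (μ k)) = (1 - γ) * ∑ k, negMulLog (μ k) := by
          simp only [← mul_assoc, ← sum_mul, sum_mul_killing_eq_one_sub hrow hμ hqsd]
        rw [← hcross]
        simp only [mul_add, sum_add_distrib, mul_sum]

end

end KilledChain

open KilledChain in
theorem killed_entropy_formula {I E : Type*} [Fintype I] [Fintype E]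
    [DecidableEq I]
    (P : Matrix (I ⊕ E) (I ⊕ E) ℝ)
    (hP1 : ∀ a, ∑ b, P a b = 1)
    (μ : I → ℝ) (hμ1 : ∑ i, μ i = 1)
    (γ : ℝ)
    (hqsd : μ ᵥ* (P.submatrix Sum.inl Sum.inl) = γ • μ)
    (K : I × I × Bool → I × I × Bool → ℝ)
    (hK : ∀ (i j l k : I) (a b : Bool),
      K (i, j, a) (l, k, b)
        = if l = j then
            (if b then P (Sum.inl j) (Sum.inl k)
             else (∑ ε : E, P (Sum.inl j) (Sum.inr ε)) * μ k)
          else 0)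
    (ζ : I × I × Bool → ℝ)
    (hζ : ∀ (i j : I) (a : Bool),
      ζ (i, j, a)
        = if a then μ i * P (Sum.inl i) (Sum.inl j)
          else μ i * (∑ ε : E, P (Sum.inl i) (Sum.inr ε)) * μ j) :
    (∑ x : I × I × Bool, ζ x * ∑ y : I × I × Bool, negMulLog (K x y))
      = (∑ i : I, μ i * negMulLog (∑ ε : E, P (Sum.inl i) (Sum.inr ε)))
        + (1 - γ) * (∑ j : I, negMulLog (μ j))
        + ∑ i : I, ∑ j : I, μ i * negMulLog (P (Sum.inl i) (Sum.inl j)) := by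
  set Q := P.submatrix Sum.inl Sum.inl
  set q : I → ℝ := fun i => ∑ ε : E, P (Sum.inl i) (Sum.inr ε)
  have hrow : ∀ i, ∑ j, Q i j + q i = 1 := fun i =>
    (Fintype.sum_sum_type _).symm.trans (hP1 (Sum.inl i))
  obtain rfl : K = killedKernel Q q μ := funext₂ fun ⟨i, j, a⟩ ⟨l, k, b⟩ => hK i j l k a b
  obtain rfl : ζ = killedLaw Q q μ := funext fun ⟨i, j, a⟩ => hζ i j a
  exact markovEntropy_killed hrow hμ1 hqsd
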